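/- arXiv:2202.13068 — 3 statements merged into one kernel-verified Lean document; each statement's English description precedes it below -/
import Mathlib

section
/- Let K : ℝ → ℝ be continuous, bounded, nonnegative, symmetric (K(−x)=K(x)), with K(0) > 0 and ∫_ℝ K = 1. Fix l > 0 and suppose θ* : [−l,l] → ℝ is continuous with θ*(x) > 0 on [−l,l] and ∫_{−l}^{l} K(x−y)θ*(y)dy = λ̃·θ*(x) for all x ∈ [−l,l], where λ̃ > 0. If α1 > λ̃ and θ2 : [−l,l] → ℝ is continuous and satisfies ∫_{−l}^{l} K(x−y)θ2(y)dy = α1·θ2(x) for all x ∈ [−l,l], then θ2 ≡ 0. -/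
/-!
Perron–Frobenius by a maximum principle. With `M` the maximum of `|ψ| / φ` on the compact set,
attained at `x₀`, positivity of the kernel gives
`|α| |ψ x₀| ≤ ∫ k x₀ y |ψ y| ≤ M ∫ k x₀ y φ y = λ M φ x₀ = λ |ψ x₀|`,
so an eigenfunction that does not vanish identically has `|α| ≤ λ`.
-/

open MeasureTheory

section PositiveEigenfunction

variable {X : Type*} [MeasurableSpace X] {μ : Measure X} {s : Set X} {k : X → X → ℝ}
  {φ ψ : X → ℝ} {lam α : ℝ}

theorem abs_mul_le_of_abs_le_mul_eigenfunction {x : X} {M : ℝ} (hs : MeasurableSet s)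
    (hk : ∀ y, 0 ≤ k x y) (hlam : 0 < lam) (hφx : 0 < φ x)
    (hφ : ∫ y in s, k x y * φ y ∂μ = lam * φ x) (hψ : ∫ y in s, k x y * ψ y ∂μ = α * ψ x)
    (hbound : ∀ y ∈ s, |ψ y| ≤ M * φ y) :
    |α| * |ψ x| ≤ lam * (M * φ x) := by
  have hint : IntegrableOn (fun y => k x y * φ y) s μ :=
    Integrable.of_integral_ne_zero (by rw [hφ]; positivity)
  have hdom : ∀ y ∈ s, |k x y * ψ y| ≤ M * (k x y * φ y) := fun y hy => by
    rw [abs_mul, abs_of_nonneg (hk y), mul_left_comm]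
    exact mul_le_mul_of_nonneg_left (hbound y hy) (hk y)
  calc |α| * |ψ x| = |∫ y in s, k x y * ψ y ∂μ| := by rw [hψ, abs_mul]
    _ ≤ ∫ y in s, |k x y * ψ y| ∂μ := abs_integral_le_integral_abs
    _ ≤ ∫ y in s, M * (k x y * φ y) ∂μ :=
      integral_mono_of_nonneg (ae_of_all _ fun _ => abs_nonneg _) (hint.const_mul M)
        ((ae_restrict_iff' hs).2 (ae_of_all _ hdom))
    _ = lam * (M * φ x) := by rw [integral_const_mul, hφ]; ring

theorem abs_eigenvalue_le_of_pos_eigenfunction [TopologicalSpace X] (hsc : IsCompact s)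
    (hs : MeasurableSet s) (hk : ∀ x y, 0 ≤ k x y) (hlam : 0 < lam)
    (hφc : ContinuousOn φ s) (hφpos : ∀ x ∈ s, 0 < φ x)
    (hφ : ∀ x ∈ s, ∫ y in s, k x y * φ y ∂μ = lam * φ x)
    (hψc : ContinuousOn ψ s) (hψ : ∀ x ∈ s, ∫ y in s, k x y * ψ y ∂μ = α * ψ x)
    {x : X} (hx : x ∈ s) (hψx : ψ x ≠ 0) :
    |α| ≤ lam := by
  obtain ⟨x₀, hx₀, hmax⟩ := hsc.exists_isMaxOn ⟨x, hx⟩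
    (hψc.abs.div hφc fun y hy => (hφpos y hy).ne')
  set M := |ψ x₀| / φ x₀
  have hbound : ∀ y ∈ s, |ψ y| ≤ M * φ y := fun y hy =>
    (div_le_iff₀ (hφpos y hy)).1 (hmax hy)
  have hψx₀ : M * φ x₀ = |ψ x₀| := div_mul_cancel₀ _ (hφpos x₀ hx₀).ne'
  have hψx₀_pos : 0 < |ψ x₀| :=
    (mul_pos (div_pos (abs_pos.2 hψx) (hφpos x hx)) (hφpos x₀ hx₀)).trans_le
      ((mul_le_mul_of_nonneg_right (hmax hx) (hφpos x₀ hx₀).le).trans_eq hψx₀)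
  have key := abs_mul_le_of_abs_le_mul_eigenfunction hs (hk x₀) hlam (hφpos x₀ hx₀)
    (hφ x₀ hx₀) (hψ x₀ hx₀) hbound
  rw [hψx₀] at key
  exact le_of_mul_le_mul_right key hψx₀_pos

theorem eqOn_zero_of_lt_abs_eigenvalue [TopologicalSpace X] (hsc : IsCompact s)
    (hs : MeasurableSet s) (hk : ∀ x y, 0 ≤ k x y) (hlam : 0 < lam)
    (hφc : ContinuousOn φ s) (hφpos : ∀ x ∈ s, 0 < φ x)
    (hφ : ∀ x ∈ s, ∫ y in s, k x y * φ y ∂μ = lam * φ x)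
    (hψc : ContinuousOn ψ s) (hψ : ∀ x ∈ s, ∫ y in s, k x y * ψ y ∂μ = α * ψ x)
    (hα : lam < |α|) :
    Set.EqOn ψ 0 s := fun x hx => by
  by_contra hψx
  exact hα.not_ge
    (abs_eigenvalue_le_of_pos_eigenfunction hsc hs hk hlam hφc hφpos hφ hψc hψ hx hψx)

end PositiveEigenfunction

theorem stmt_3_general (K : ℝ → ℝ)
    (hKnonneg : ∀ x, 0 ≤ K x)
    (l : ℝ)
    (θstar : ℝ → ℝ) (hθcont : ContinuousOn θstar (Set.Icc (-l) l))
    (hθpos : ∀ x ∈ Set.Icc (-l) l, 0 < θstar x)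
    (lamt : ℝ) (hlamt : 0 < lamt)
    (hθeig : ∀ x ∈ Set.Icc (-l) l, ∫ y in (-l)..l, K (x - y) * θstar y = lamt * θstar x)
    (α1 : ℝ) (hα1 : lamt < α1)
    (θ2 : ℝ → ℝ) (hθ2cont : ContinuousOn θ2 (Set.Icc (-l) l))
    (hθ2eig : ∀ x ∈ Set.Icc (-l) l, ∫ y in (-l)..l, K (x - y) * θ2 y = α1 * θ2 x) :
    ∀ x ∈ Set.Icc (-l) l, θ2 x = 0 := by
  intro x hx
  have hIcc : ∀ f : ℝ → ℝ, ∫ y in (-l)..l, f y = ∫ y in Set.Icc (-l) l, f y := fun f => by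
    rw [intervalIntegral.integral_of_le (hx.1.trans hx.2), integral_Icc_eq_integral_Ioc]
  exact eqOn_zero_of_lt_abs_eigenvalue isCompact_Icc measurableSet_Icc
    (fun _ _ => hKnonneg _) hlamt hθcont hθpos (fun x hx => (hIcc _).symm.trans (hθeig x hx))
    hθ2cont (fun x hx => (hIcc _).symm.trans (hθ2eig x hx))
    (hα1.trans_le (le_abs_self α1)) hx

theorem stmt_3 (K : ℝ → ℝ) (hKcont : Continuous K) (hKbdd : ∃ C : ℝ, ∀ x, |K x| ≤ C)
    (hKnonneg : ∀ x, 0 ≤ K x) (hKsymm : ∀ x, K (-x) = K x) (hK0 : 0 < K 0)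
    (hKint : MeasureTheory.Integrable K) (hKone : ∫ x, K x = 1)
    (l : ℝ) (hl : 0 < l)
    (θstar : ℝ → ℝ) (hθcont : ContinuousOn θstar (Set.Icc (-l) l))
    (hθpos : ∀ x ∈ Set.Icc (-l) l, 0 < θstar x)
    (lamt : ℝ) (hlamt : 0 < lamt)
    (hθeig : ∀ x ∈ Set.Icc (-l) l, ∫ y in (-l)..l, K (x - y) * θstar y = lamt * θstar x)
    (α1 : ℝ) (hα1 : lamt < α1)
    (θ2 : ℝ → ℝ) (hθ2cont : ContinuousOn θ2 (Set.Icc (-l) l))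
    (hθ2eig : ∀ x ∈ Set.Icc (-l) l, ∫ y in (-l)..l, K (x - y) * θ2 y = α1 * θ2 x) :
    ∀ x ∈ Set.Icc (-l) l, θ2 x = 0 :=
  stmt_3_general K hKnonneg l θstar hθcont hθpos lamt hlamt hθeig α1 hα1 θ2 hθ2cont hθ2eig
end

section
/- Let K : ℝ → ℝ be continuous, bounded, nonnegative, symmetric, K(0)>0, ∫_ℝ K = 1, and fix l > 0. Suppose θ* is a continuous positive function on [−l,l] with ∫_{−l}^{l} K(x−y)θ*(y)dy = λ̃·θ*(x) and λ̃ > 0. If α1 > λ̃ and ξ : [−l,l] → ℝ is continuous, ξ ≥ 0, ξ ≢ 0, and satisfies ∫_{−l}^{l} K(x−y)ξ(y)dy ≤ α1·ξ(x) for all x ∈ [−l,l], then ξ(x) > 0 for all x ∈ [−l,l]. -/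
/-!
A zero of `ξ` propagates: if `ξ x = 0` then `∫ K(x - y) ξ(y) dy ≤ α₁ ξ(x) = 0`, and since the
integrand is continuous and nonnegative, `ξ` vanishes wherever `K(x - y) > 0`, in particular on a
whole `δ`-neighbourhood of `x`, where `δ` comes from `K 0 > 0`. The zero set of `ξ` is then a
nonempty clopen subset of the connected interval `[-l, l]`, contradicting `ξ ≢ 0`.
-/

open MeasureTheory Set

theorem IsPreconnected.eq_of_forall_dist_lt_imp {α β : Type*} [PseudoMetricSpace α]
    [TopologicalSpace β] [T1Space β] {s : Set α} (hs : IsPreconnected s) {f : α → β}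
    (hf : ContinuousOn f s) {c : β} {δ : ℝ} (hδ : 0 < δ)
    (hspread : ∀ x ∈ s, f x = c → ∀ y ∈ s, dist x y < δ → f y = c)
    {x₀ : α} (hx₀ : x₀ ∈ s) (hc : f x₀ = c) : ∀ y ∈ s, f y = c := by
  have := isPreconnected_iff_preconnectedSpace.1 hs
  let S : Set s := {x | f x = c}
  have hclosed : IsClosed S := isClosed_singleton.preimage hf.domRestrict
  have hopen : IsOpen S := Metric.isOpen_iff.2 fun x hx =>
    ⟨δ, hδ, fun y hy => hspread x x.2 hx y y.2 (by rwa [dist_comm])⟩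
  have hS : S = univ := IsClopen.eq_univ ⟨hclosed, hopen⟩ ⟨⟨x₀, hx₀⟩, hc⟩
  exact fun y hy => show (⟨y, hy⟩ : s) ∈ S from hS ▸ mem_univ _

theorem intervalIntegral_kernel_mul_pos {K ξ : ℝ → ℝ} {a b x y : ℝ} (hab : a < b)
    (hK : Continuous K) (hK0 : ∀ t, 0 ≤ K t) (hξ : ContinuousOn ξ (Icc a b))
    (hξ0 : ∀ y ∈ Icc a b, 0 ≤ ξ y) (hy : y ∈ Icc a b) (hKy : 0 < K (x - y)) (hξy : 0 < ξ y) :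
    0 < ∫ y in a..b, K (x - y) * ξ y := by
  have := intervalIntegral.integral_lt_integral_of_continuousOn_of_le_of_exists_lt hab
    continuousOn_const ((hK.comp (continuous_sub_left x)).continuousOn.mul hξ)
    (fun z hz => mul_nonneg (hK0 _) (hξ0 z (Ioc_subset_Icc_self hz)))
    ⟨y, hy, mul_pos hKy hξy⟩
  simpa using this

theorem stmt_4_general (K : ℝ → ℝ) (hKcont : Continuous K)
    (hKnonneg : ∀ x, 0 ≤ K x) (hK0 : 0 < K 0)
    (l : ℝ) (hl : 0 < l)
    (α1 : ℝ)
    (ξ : ℝ → ℝ) (hξcont : ContinuousOn ξ (Set.Icc (-l) l))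
    (hξnonneg : ∀ x ∈ Set.Icc (-l) l, 0 ≤ ξ x)
    (hξne : ∃ x ∈ Set.Icc (-l) l, ξ x ≠ 0)
    (hξineq : ∀ x ∈ Set.Icc (-l) l, ∫ y in (-l)..l, K (x - y) * ξ y ≤ α1 * ξ x) :
    ∀ x ∈ Set.Icc (-l) l, 0 < ξ x := by
  obtain ⟨δ, hδ, hKδ⟩ : ∃ δ > 0, ∀ t, dist t 0 < δ → 0 < K t :=
    Metric.eventually_nhds_iff.1 (continuousAt_const.eventually_lt hKcont.continuousAt hK0)
  have hspread : ∀ x ∈ Icc (-l) l, ξ x = 0 → ∀ y ∈ Icc (-l) l, dist x y < δ → ξ y = 0 := by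
    intro x hx hx0 y hy hxy
    refine ((hξnonneg y hy).lt_or_eq.resolve_left fun hξy => ?_).symm
    have hpos := intervalIntegral_kernel_mul_pos (x := x) (by linarith) hKcont hKnonneg hξcont
      hξnonneg hy (hKδ _ (by rwa [dist_zero_right, ← dist_eq_norm])) hξy
    have hineq := hξineq x hx
    rw [hx0, mul_zero] at hineq
    exact hpos.not_ge hineq
  intro x hx
  refine (hξnonneg x hx).lt_of_ne' fun hx0 => ?_
  obtain ⟨z, hz, hzne⟩ := hξne
  exact hzne (isPreconnected_Icc.eq_of_forall_dist_lt_imp hξcont hδ hspread hx hx0 z hz)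

theorem stmt_4 (K : ℝ → ℝ) (hKcont : Continuous K) (hKbdd : ∃ C : ℝ, ∀ x, |K x| ≤ C)
    (hKnonneg : ∀ x, 0 ≤ K x) (hKsymm : ∀ x, K (-x) = K x) (hK0 : 0 < K 0)
    (hKint : MeasureTheory.Integrable K) (hKone : ∫ x, K x = 1)
    (l : ℝ) (hl : 0 < l)
    (θstar : ℝ → ℝ) (hθcont : ContinuousOn θstar (Set.Icc (-l) l))
    (hθpos : ∀ x ∈ Set.Icc (-l) l, 0 < θstar x)
    (lamt : ℝ) (hlamt : 0 < lamt)
    (hθeig : ∀ x ∈ Set.Icc (-l) l, ∫ y in (-l)..l, K (x - y) * θstar y = lamt * θstar x)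
    (α1 : ℝ) (hα1 : lamt < α1)
    (ξ : ℝ → ℝ) (hξcont : ContinuousOn ξ (Set.Icc (-l) l))
    (hξnonneg : ∀ x ∈ Set.Icc (-l) l, 0 ≤ ξ x)
    (hξne : ∃ x ∈ Set.Icc (-l) l, ξ x ≠ 0)
    (hξineq : ∀ x ∈ Set.Icc (-l) l, ∫ y in (-l)..l, K (x - y) * ξ y ≤ α1 * ξ x) :
    ∀ x ∈ Set.Icc (-l) l, 0 < ξ x :=
  stmt_4_general K hKcont hKnonneg hK0 l hl α1 ξ hξcont hξnonneg hξne hξineq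
end

section
/- Let J : ℝ → ℝ be continuous, bounded, nonnegative, symmetric, with ∫_ℝ J = 1, and define the tent function θ_l(x) = max(l − |x|, 0). Then for every ε > 0 there exists l_ε > 0 such that for all l ≥ l_ε and all x ∈ [−l, l], ∫_{−l}^{l} J(x−y)·θ_l(y) dy − θ_l(x) > −ε·θ_l(x). -/
/-!
Substitute `z = x - y`, so the integral is `∫ J z * θ_l (x - z) dz` over the line, and keep only
`|z| ≤ R`, where `∫_{-R}^R J > 1 - ε/2`. If `θ_l x` is large compared with `R/ε`, the 1-Lipschitz
bound `θ_l (x - z) ≥ θ_l x - |z|` costs only `R`. Otherwise `x` is within `2R/ε` of `±l`, so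
`|x| ≥ R` for large `l`; for `0 ≤ x` this makes `θ_l (x - z) = max (θ_l x + z) 0` on `[-R, R]`,
and as `z ↦ J z * z` is odd the integral is at least `θ_l x * ∫_{-R}^R J`. At `x = ±l` both sides
vanish and strictness comes from `∫_0^R J z * z > 0`.
-/

open MeasureTheory intervalIntegral Set Filter Function

def tent (l x : ℝ) : ℝ := max (l - |x|) 0

lemma tent_nonneg (l x : ℝ) : 0 ≤ tent l x := le_max_right _ _

lemma tent_le_abs (l x : ℝ) : tent l x ≤ |l| :=
  max_le (by linarith [abs_nonneg x, le_abs_self l]) (abs_nonneg l)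

lemma continuous_tent (l : ℝ) : Continuous (tent l) :=
  (continuous_const.sub continuous_abs).max continuous_const

lemma tent_neg (l x : ℝ) : tent l (-x) = tent l x := by simp only [tent, abs_neg]

lemma support_tent_subset (l : ℝ) : support (tent l) ⊆ Ioc (-l) l := by
  intro y hy
  have : |y| < l := by
    by_contra! h
    exact hy (max_eq_right (by linarith))
  exact ⟨(abs_lt.1 this).1, (abs_lt.1 this).2.le⟩

lemma tent_of_abs_le {l x : ℝ} (hx : |x| ≤ l) : tent l x = l - |x| :=
  max_eq_left (by linarith)

lemma tent_sub_abs_le (l x z : ℝ) : tent l x - |z| ≤ tent l (x - z) := by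
  unfold tent
  have := abs_sub x z
  rcases le_total (l - |x|) 0 with h | h
  · rw [max_eq_right h]; linarith [abs_nonneg z, le_max_right (l - |x - z|) 0]
  · rw [max_eq_left h]; linarith [le_max_left (l - |x - z|) 0]

lemma tent_sub_of_le {l x z : ℝ} (hzx : z ≤ x) : tent l (x - z) = max (l - x + z) 0 := by
  rw [tent, abs_of_nonneg (sub_nonneg.2 hzx)]
  ring_nf

section Kernel

variable {J : ℝ → ℝ}

lemma exists_pos_lt_intervalIntegral (hJ : Integrable J) {c : ℝ} (hc : c < ∫ x, J x) :
    ∃ R > 0, c < ∫ x in -R..R, J x := by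
  have hlim : Tendsto (fun R => ∫ x in -R..R, J x) atTop (nhds (∫ x, J x)) :=
    intervalIntegral_tendsto_integral hJ tendsto_neg_atTop_atBot tendsto_id
  obtain ⟨R, hR0, hRc⟩ := ((eventually_gt_atTop 0).and (hlim.eventually (lt_mem_nhds hc))).exists
  exact ⟨R, hR0, hRc⟩

lemma integral_mul_self_eq_zero_of_even (hs : ∀ x, J (-x) = J x) (a : ℝ) :
    ∫ z in -a..a, J z * z = 0 := by
  have h := integral_comp_neg (a := -a) (b := a) fun z => J z * z
  simp only [neg_neg, hs, mul_neg, intervalIntegral.integral_neg] at h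
  linarith

lemma integral_mul_id_pos {f : ℝ → ℝ} (hf : Continuous f) (hf0 : ∀ z, 0 ≤ f z) {a b : ℝ}
    (ha : 0 ≤ a) (h : 0 < ∫ z in a..b, f z) : 0 < ∫ z in a..b, f z * z := by
  obtain ⟨hab, hsupp⟩ := (integral_pos_iff_support_of_nonneg_ae
    (Eventually.of_forall hf0) (hf.intervalIntegrable a b)).1 h
  have hnn : 0 ≤ᵐ[volume.restrict (uIoc a b)] fun z => f z * z := by
    rw [uIoc_of_le hab.le, EventuallyLE, ae_restrict_iff' measurableSet_Ioc]
    exact Eventually.of_forall fun z hz => mul_nonneg (hf0 z) (ha.trans hz.1.le)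
  rw [integral_pos_iff_support_of_nonneg_ae' hnn
    ((by fun_prop : Continuous fun z => f z * z).intervalIntegrable _ _)]
  refine ⟨hab, hsupp.trans_le (measure_mono fun z ⟨hfz, hz⟩ => ⟨?_, hz⟩)⟩
  exact mul_ne_zero hfz (ha.trans_lt hz.1).ne'

lemma mul_integral_le_integral_mul_max (hJ : Continuous J) (hJ0 : ∀ x, 0 ≤ J x)
    (hs : ∀ x, J (-x) = J x) {R : ℝ} (hR : 0 ≤ R) (m : ℝ) :
    m * ∫ z in -R..R, J z ≤ ∫ z in -R..R, J z * max (m + z) 0 := by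
  have hodd : ∫ z in -R..R, J z * (m + z) = m * ∫ z in -R..R, J z := by
    simp only [mul_add, mul_comm (J _) m]
    rw [integral_add ((by fun_prop : Continuous fun z => m * J z).intervalIntegrable _ _)
      ((by fun_prop : Continuous fun z => J z * z).intervalIntegrable _ _),
      intervalIntegral.integral_const_mul,
      integral_mul_self_eq_zero_of_even hs, add_zero]
  rw [← hodd]
  refine integral_mono_on (by linarith)
    ((by fun_prop : Continuous fun z => J z * (m + z)).intervalIntegrable _ _)
    ((by fun_prop : Continuous fun z => J z * max (m + z) 0).intervalIntegrable _ _)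
    fun z _ => mul_le_mul_of_nonneg_left (le_max_left _ _) (hJ0 z)

lemma integral_mul_max_pos (hJ : Continuous J) (hJ0 : ∀ x, 0 ≤ J x)
    (hs : ∀ x, J (-x) = J x) {R : ℝ} (hR : 0 < R) (h : 0 < ∫ z in -R..R, J z) :
    0 < ∫ z in -R..R, J z * max z 0 := by
  have hsplit := integral_add_adjacent_intervals (hJ.intervalIntegrable (μ := volume) (-R) 0)
    (hJ.intervalIntegrable 0 R)
  have hsymm : ∫ z in -R..0, J z = ∫ z in (0 : ℝ)..R, J z := by
    simpa [hs] using (integral_comp_neg (a := 0) (b := R) J).symm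
  have hcont : Continuous fun z => J z * max z 0 := by fun_prop
  calc 0 < ∫ z in (0 : ℝ)..R, J z * z := integral_mul_id_pos hJ hJ0 le_rfl (by linarith)
    _ = ∫ z in (0 : ℝ)..R, J z * max z 0 := by
      refine integral_congr fun z hz => ?_
      rw [uIcc_of_le hR.le] at hz
      simp only [max_eq_left hz.1]
    _ ≤ ∫ z in -R..R, J z * max z 0 :=
      integral_mono_interval (by linarith) hR.le le_rfl
        (Eventually.of_forall fun z => mul_nonneg (hJ0 z) (le_max_right _ _))
        (hcont.intervalIntegrable _ _)

lemma integral_mul_tent_le (hJ : Integrable J) (hJ0 : ∀ x, 0 ≤ J x) {R : ℝ} (hR : 0 ≤ R)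
    (l x : ℝ) : ∫ z in -R..R, J z * tent l (x - z) ≤ ∫ y in -l..l, J (x - y) * tent l y := by
  have hint : Integrable fun z => J z * tent l (x - z) :=
    hJ.mul_bdd ((continuous_tent l).comp (continuous_const.sub continuous_id)).aestronglyMeasurable
      (Eventually.of_forall fun z => by
        rw [Real.norm_of_nonneg (tent_nonneg _ _)]; exact tent_le_abs l _)
  have hshift : ∫ y, J (x - y) * tent l y = ∫ z, J z * tent l (x - z) := by
    simpa using integral_sub_left_eq_self (fun z => J z * tent l (x - z)) volume x
  rw [integral_eq_integral_of_support_subset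
      ((support_mul_subset_right _ _).trans (support_tent_subset l)), hshift,
    integral_of_le (by linarith)]
  exact setIntegral_le_integral hint
    (Eventually.of_forall fun z => mul_nonneg (hJ0 z) (tent_nonneg _ _))

lemma integral_mul_tent_neg (hs : ∀ x, J (-x) = J x) (R l x : ℝ) :
    ∫ z in -R..R, J z * tent l (-x - z) = ∫ z in -R..R, J z * tent l (x - z) := by
  have h := integral_comp_neg (a := -R) (b := R) fun z => J z * tent l (x - z)
  simp only [neg_neg, hs, sub_neg_eq_add] at h
  rw [← h]
  refine integral_congr fun z _ => ?_
  rw [← tent_neg, neg_sub, sub_neg_eq_add, add_comm]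

lemma sub_mul_integral_le_integral_mul_tent (hJ : Continuous J) (hJ0 : ∀ x, 0 ≤ J x) {R : ℝ}
    (hR : 0 ≤ R) (l x : ℝ) :
    (tent l x - R) * ∫ z in -R..R, J z ≤ ∫ z in -R..R, J z * tent l (x - z) := by
  rw [← intervalIntegral.integral_const_mul]
  have hcont : Continuous fun z => J z * tent l (x - z) :=
    hJ.mul ((continuous_tent l).comp (continuous_const.sub continuous_id))
  refine integral_mono_on (by linarith)
    ((by fun_prop : Continuous fun z => (tent l x - R) * J z).intervalIntegrable _ _)
    (hcont.intervalIntegrable _ _)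
    fun z hz => ?_
  rw [mul_comm]
  refine mul_le_mul_of_nonneg_left ?_ (hJ0 z)
  linarith [tent_sub_abs_le l x z, abs_le.2 hz]

lemma mul_tent_lt_integral_of_le_abs (hJ : Continuous J) (hJ0 : ∀ x, 0 ≤ J x)
    (hs : ∀ x, J (-x) = J x) {c R l x : ℝ} (hR : 0 < R) (hc : c < ∫ z in -R..R, J z)
    (hA : 0 < ∫ z in -R..R, J z) (hRx : R ≤ |x|) (hxl : |x| ≤ l) :
    c * tent l x < ∫ z in -R..R, J z * tent l (x - z) := by
  wlog hx : 0 ≤ x generalizing x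
  · have := this (x := -x) (by rwa [abs_neg]) (by rwa [abs_neg]) (by linarith)
    rwa [tent_neg, integral_mul_tent_neg hs] at this
  have hL : ∫ z in -R..R, J z * tent l (x - z) = ∫ z in -R..R, J z * max (tent l x + z) 0 := by
    refine integral_congr fun z hz => ?_
    rw [uIcc_of_le (by linarith)] at hz
    rw [abs_of_nonneg hx] at hRx hxl
    rw [tent_sub_of_le (hz.2.trans hRx), tent_of_abs_le (by rwa [abs_of_nonneg hx]),
      abs_of_nonneg hx]
  rw [hL]
  rcases (tent_nonneg l x).eq_or_lt with h0 | hpos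
  · simpa [← h0] using integral_mul_max_pos hJ hJ0 hs hR hA
  · calc c * tent l x < tent l x * ∫ z in -R..R, J z := by
          rw [mul_comm]; exact mul_lt_mul_of_pos_left hc hpos
      _ ≤ _ := mul_integral_le_integral_mul_max hJ hJ0 hs hR.le _

lemma one_sub_mul_tent_lt_integral_of_lt_tent (hJ : Continuous J) (hJ0 : ∀ x, 0 ≤ J x)
    {δ R l x : ℝ} (hδ : 0 < δ) (hδ1 : δ ≤ 1) (hR : 0 ≤ R) (hA : 1 - δ / 2 < ∫ z in -R..R, J z)
    (hx : 2 * R / δ < tent l x) :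
    (1 - δ) * tent l x < ∫ z in -R..R, J z * tent l (x - z) := by
  refine lt_of_lt_of_le ?_ (sub_mul_integral_le_integral_mul_tent hJ hJ0 hR l x)
  have hRt : 2 * R < tent l x * δ := (div_lt_iff₀ hδ).1 hx
  have hRt' : R < tent l x := by nlinarith [tent_nonneg l x]
  nlinarith [mul_lt_mul_of_pos_left hA (sub_pos.2 hRt')]

theorem exists_one_sub_mul_tent_lt_integral (hJ : Continuous J) (hJi : Integrable J)
    (hJ0 : ∀ x, 0 ≤ J x) (hs : ∀ x, J (-x) = J x) (hJ1 : ∫ x, J x = 1) {δ : ℝ} (hδ : 0 < δ)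
    (hδ1 : δ ≤ 1) :
    ∃ l₀ > 0, ∀ l ≥ l₀, ∀ x ∈ Icc (-l) l,
      (1 - δ) * tent l x < ∫ y in -l..l, J (x - y) * tent l y := by
  obtain ⟨R, hR, hA⟩ := exists_pos_lt_intervalIntegral hJi (c := 1 - δ / 2) (by linarith)
  refine ⟨2 * R / δ + R, by positivity, fun l hl x hx => ?_⟩
  refine lt_of_lt_of_le ?_ (integral_mul_tent_le hJi hJ0 hR.le l x)
  by_cases hfar : 2 * R / δ < tent l x
  · exact one_sub_mul_tent_lt_integral_of_lt_tent hJ hJ0 hδ hδ1 hR.le hA hfar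
  · have hxl : |x| ≤ l := abs_le.2 hx
    have : l - |x| ≤ tent l x := le_max_left _ _
    exact mul_tent_lt_integral_of_le_abs hJ hJ0 hs hR (by linarith) (by linarith) (by linarith) hxl

end Kernel

theorem stmt_5_general (J : ℝ → ℝ) (hJcont : Continuous J)
    (hJnonneg : ∀ x, 0 ≤ J x) (hJsymm : ∀ x, J (-x) = J x)
    (hJint : MeasureTheory.Integrable J) (hJone : ∫ x, J x = 1) :
    ∀ ε > (0:ℝ), ∃ lε > (0:ℝ), ∀ l ≥ lε, ∀ x ∈ Set.Icc (-l) l,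
      (∫ y in (-l)..l, J (x - y) * max (l - |y|) 0) - max (l - |x|) 0 >
        -ε * max (l - |x|) 0 := by
  intro ε hε
  obtain ⟨l₀, hl₀, h⟩ := exists_one_sub_mul_tent_lt_integral hJcont hJint hJnonneg hJsymm hJone
    (lt_min hε one_pos) (min_le_right ε 1)
  refine ⟨l₀, hl₀, fun l hl x hx => ?_⟩
  have hmono : (1 - ε) * tent l x ≤ (1 - min ε 1) * tent l x :=
    mul_le_mul_of_nonneg_right (by linarith [min_le_left ε 1]) (tent_nonneg l x)
  change (∫ y in -l..l, J (x - y) * tent l y) - tent l x > -ε * tent l x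
  linarith [h l hl x hx]

theorem stmt_5 (J : ℝ → ℝ) (hJcont : Continuous J) (hJbdd : ∃ C : ℝ, ∀ x, |J x| ≤ C)
    (hJnonneg : ∀ x, 0 ≤ J x) (hJsymm : ∀ x, J (-x) = J x)
    (hJint : MeasureTheory.Integrable J) (hJone : ∫ x, J x = 1) :
    ∀ ε > (0:ℝ), ∃ lε > (0:ℝ), ∀ l ≥ lε, ∀ x ∈ Set.Icc (-l) l,
      (∫ y in (-l)..l, J (x - y) * max (l - |y|) 0) - max (l - |x|) 0 >
        -ε * max (l - |x|) 0 :=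
  stmt_5_general J hJcont hJnonneg hJsymm hJint hJone
end
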